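/- arXiv:math/0101179 — 2 statements merged into one kernel-verified Lean document; each statement's English description precedes it below -/
import Mathlib

section
/- Let J_{αa} = {a} ∪ {n+1,…,2n} \ {2n+1−α} for 1 ≤ a,α ≤ n, and for a subset J ⊆ {1,…,2n} let J^c = {1,…,2n}\J and ℓ(J,J^c) = card{(j',j'') ∈ J×J^c : j' > j''}. Then ℓ(J_{αa}, J_{αa}^c) = a + α + (n−1)² − 2. -/
/-- `ℓ(J,K)` counts pairs `(j',j'') ∈ J × K` with `j' > j''`. -/
def pairCount (J K : Finset ℕ) : ℕ :=
  ((J ×ˢ K).filter fun p => p.2 < p.1).card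

lemma pairCount_eq (J K : Finset ℕ) :
    pairCount J K = ∑ j ∈ J, (K.filter fun k => k < j).card := by
  unfold pairCount
  rw [Finset.card_filter, Finset.sum_product]
  exact Finset.sum_congr rfl fun j _ => (Finset.card_filter _ _).symm

/-- For `J_{αa} = {a} ∪ {n+1,…,2n} \ {2n+1−α}` one has
`ℓ(J_{αa}, J_{αa}ᶜ) = a + α + (n−1)² − 2`, where the complement is taken in `{1,…,2n}`. -/
theorem ell_J_alpha_a (n a α : ℕ) (hn : 1 ≤ n) (ha : 1 ≤ a) (han : a ≤ n)
    (hα : 1 ≤ α) (hαn : α ≤ n) :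
    pairCount (insert a ((Finset.Icc (n + 1) (2 * n)).erase (2 * n + 1 - α)))
        (Finset.Icc 1 (2 * n) \
          insert a ((Finset.Icc (n + 1) (2 * n)).erase (2 * n + 1 - α))) =
      a + α + (n - 1) ^ 2 - 2 := by
  set b := 2 * n + 1 - α with hbdef
  have hb1 : n + 1 ≤ b := by omega
  have hb2 : b ≤ 2 * n := by omega
  set S := (Finset.Icc (n + 1) (2 * n)).erase b with hSdef
  set K := Finset.Icc 1 (2 * n) \ insert a S with hKdef
  have haS : a ∉ S := by
    simp only [hSdef, Finset.mem_erase, Finset.mem_Icc]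
    omega
  have hK : K = insert b ((Finset.Icc 1 n).erase a) := by
    ext x
    simp only [hKdef, hSdef, Finset.mem_sdiff, Finset.mem_insert, Finset.mem_erase,
      Finset.mem_Icc]
    omega
  rw [pairCount_eq, Finset.sum_insert haS]
  have h1 : (K.filter fun k => k < a).card = a - 1 := by
    have : (K.filter fun k => k < a) = Finset.Icc 1 (a - 1) := by
      ext x
      simp only [hK, Finset.mem_filter, Finset.mem_insert, Finset.mem_erase, Finset.mem_Icc]
      omega
    rw [this, Nat.card_Icc]
    omega
  have key : ∀ j ∈ S, (K.filter fun k => k < j).card = (n - 1) + if b < j then 1 else 0 := by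
    intro j hj
    simp only [hSdef, Finset.mem_erase, Finset.mem_Icc] at hj
    by_cases hbj : b < j
    · rw [if_pos hbj, hK]
      rw [Finset.filter_true_of_mem (by
        intro x hx
        simp only [Finset.mem_insert, Finset.mem_erase, Finset.mem_Icc] at hx
        omega)]
      rw [Finset.card_insert_of_notMem (by
        simp only [Finset.mem_erase, Finset.mem_Icc]; omega)]
      rw [Finset.card_erase_of_mem (by simp only [Finset.mem_Icc]; omega), Nat.card_Icc]
      omega
    · rw [if_neg hbj]
      have hfi : (K.filter fun k => k < j) = (Finset.Icc 1 n).erase a := by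
        ext x
        simp only [hK, Finset.mem_filter, Finset.mem_insert, Finset.mem_erase, Finset.mem_Icc]
        omega
      rw [hfi, Finset.card_erase_of_mem (by simp only [Finset.mem_Icc]; omega), Nat.card_Icc]
      omega
  rw [Finset.sum_congr rfl key, Finset.sum_add_distrib, Finset.sum_const, smul_eq_mul]
  have hcardS : S.card = n - 1 := by
    rw [hSdef, Finset.card_erase_of_mem (by simp only [Finset.mem_Icc]; omega), Nat.card_Icc]
    omega
  have hsumif : (∑ j ∈ S, if b < j then 1 else 0) = 2 * n - b := by
    rw [← Finset.card_filter]
    have : S.filter (fun j => b < j) = Finset.Icc (b + 1) (2 * n) := by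
      ext x
      simp only [hSdef, Finset.mem_filter, Finset.mem_erase, Finset.mem_Icc]
      omega
    rw [this, Nat.card_Icc]
    omega
  rw [hcardS, hsumif, h1, pow_two]
  have hm : 0 ≤ (n - 1) * (n - 1) := Nat.zero_le _
  set m := (n - 1) * (n - 1)
  omega
end

section
/- In the quantum 2×2 matrix algebra, the localization C[GL_2]_q of C[Mat_2]_q at the central element D = det_q z carries a unique antilinear antiautomorphism * with (z_1^1)* = q^{−2} D^{−1} z_2^2, (z_2^1)* = −q^{−1} D^{−1} z_1^2, (z_1^2)* = −q^{−1} D^{−1} z_2^1, (z_2^2)* = D^{−1} z_1^1, and this * is an involution (** = id); moreover D D* = D* D = q^{−2}. -/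
/-!
An antilinear antihomomorphism `A → B` is the same as a `ℂ`-algebra map from `A` into `Bᵐᵒᵖ`
with `ℂ` acting through complex conjugation. Since `ℂ[GL_2]_q` is presented by generators and
relations, `*` exists once the prescribed images of the `z_a^α`, together with `q²D` for
`D⁻¹`, satisfy the reversed and conjugated relations; for real `q` every quadratic relation
pulls back to another one of the defining relations, because `(z_a^α)*` is a scalar times
`D⁻¹ z_{ā}^{ᾱ}` with `D⁻¹` central. The value of `D⁻¹` is forced: the images of the generators
give `D* = q⁻²D⁻¹`. Uniqueness and `** = id` follow because algebra maps out of `ℂ[GL_2]_q`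
are determined by the generators, and `z ↦ z**` fixes them since the two scalars picked up
multiply to `q⁻²`, which cancels against `D⁻¹ ↦ q²D`.
-/

noncomputable section

/-- Generators of ℂ[GL_2]_q: the four matrix entries `z_a^α` and the inverse `D⁻¹`
of the quantum determinant. -/
abbrev GL2Gen := (Fin 2 × Fin 2) ⊕ Unit

/-- `z_a^α` in the free algebra; `(a, α)` means column `a`, row `α` (0-indexed). -/
def Zf (g : Fin 2 × Fin 2) : FreeAlgebra ℂ GL2Gen := FreeAlgebra.ι ℂ (Sum.inl g)

/-- `D⁻¹` in the free algebra. -/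
def Wf : FreeAlgebra ℂ GL2Gen := FreeAlgebra.ι ℂ (Sum.inr ())

/-- The quantum determinant `D = z_1^1 z_2^2 − q z_1^2 z_2^1` in the free algebra. -/
def Df (q : ℂ) : FreeAlgebra ℂ GL2Gen := Zf (0,0) * Zf (1,1) - q • (Zf (0,1) * Zf (1,0))

/-- Defining relations of ℂ[GL_2]_q: the quantum 2×2 matrix relations together with the
relations making `D⁻¹` a central two-sided inverse of `D`. -/
inductive GL2Rel (q : ℂ) : FreeAlgebra ℂ GL2Gen → FreeAlgebra ℂ GL2Gen → Prop
  | r1 : GL2Rel q (Zf (0,0) * Zf (0,1)) (q • (Zf (0,1) * Zf (0,0)))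
  | r2 : GL2Rel q (Zf (0,0) * Zf (1,0)) (q • (Zf (1,0) * Zf (0,0)))
  | r3 : GL2Rel q (Zf (0,1) * Zf (1,1)) (q • (Zf (1,1) * Zf (0,1)))
  | r4 : GL2Rel q (Zf (1,0) * Zf (1,1)) (q • (Zf (1,1) * Zf (1,0)))
  | r5 : GL2Rel q (Zf (1,0) * Zf (0,1))  (Zf (0,1) * Zf (1,0))
  | r6 : GL2Rel q (Zf (0,0) * Zf (1,1))
      (Zf (1,1) * Zf (0,0) + (q - q⁻¹) • (Zf (0,1) * Zf (1,0)))
  | rinv1 : GL2Rel q (Wf * Df q) 1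
  | rinv2 : GL2Rel q (Df q * Wf) 1
  | rcomm (g : Fin 2 × Fin 2) : GL2Rel q (Wf * Zf g) (Zf g * Wf)

/-- The localization ℂ[GL_2]_q of ℂ[Mat_2]_q at the central element `det_q z`. -/
def QGL2 (q : ℂ) : Type := RingQuot (GL2Rel q)

instance (q : ℂ) : Ring (QGL2 q) := by unfold QGL2; infer_instance
instance (q : ℂ) : Algebra ℂ (QGL2 q) := by unfold QGL2; infer_instance

def Z (q : ℂ) (g : Fin 2 × Fin 2) : QGL2 q := RingQuot.mkAlgHom ℂ (GL2Rel q) (Zf g)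
def W (q : ℂ) : QGL2 q := RingQuot.mkAlgHom ℂ (GL2Rel q) Wf
def D (q : ℂ) : QGL2 q := RingQuot.mkAlgHom ℂ (GL2Rel q) (Df q)

/-- `st` is an antilinear antiautomorphism with the prescribed values on the generators. -/
def IsStar (q : ℝ) (st : QGL2 (q : ℂ) → QGL2 (q : ℂ)) : Prop :=
  Function.Bijective st ∧
  (∀ x y, st (x + y) = st x + st y) ∧
  (∀ x y, st (x * y) = st y * st x) ∧
  (∀ (c : ℂ) x, st (c • x) = (starRingEnd ℂ) c • st x) ∧
  st (Z (q : ℂ) (0,0)) = ((q : ℂ) ^ (-2 : ℤ)) • (W (q : ℂ) * Z (q : ℂ) (1,1)) ∧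
  st (Z (q : ℂ) (1,0)) = (-(q : ℂ)⁻¹) • (W (q : ℂ) * Z (q : ℂ) (0,1)) ∧
  st (Z (q : ℂ) (0,1)) = (-(q : ℂ)⁻¹) • (W (q : ℂ) * Z (q : ℂ) (1,0)) ∧
  st (Z (q : ℂ) (1,1)) = W (q : ℂ) * Z (q : ℂ) (0,0)

/-- `Bᵐᵒᵖ` with scalars acting through `star`. -/
def ConjOpposite (B : Type*) : Type _ := Bᵐᵒᵖ

namespace ConjOpposite

variable {R B : Type*}

def toConj (x : B) : ConjOpposite B := MulOpposite.op x

def ofConj (x : ConjOpposite B) : B := MulOpposite.unop x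

@[simp] theorem ofConj_toConj (x : B) : ofConj (toConj x) = x := rfl

variable [CommSemiring R] [StarRing R] [Semiring B] [Algebra R B]

instance : Semiring (ConjOpposite B) := inferInstanceAs (Semiring Bᵐᵒᵖ)

instance : Algebra R (ConjOpposite B) :=
  RingHom.toAlgebra' ((algebraMap R Bᵐᵒᵖ).comp (starRingEnd R))
    fun c x => Algebra.commutes (A := Bᵐᵒᵖ) (starRingEnd R c) x

@[simp] theorem ofConj_add (x y : ConjOpposite B) : ofConj (x + y) = ofConj x + ofConj y := rfl

@[simp] theorem ofConj_mul (x y : ConjOpposite B) : ofConj (x * y) = ofConj y * ofConj x := rfl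

@[simp] theorem ofConj_one : ofConj (1 : ConjOpposite B) = 1 := rfl

@[simp] theorem ofConj_smul (c : R) (x : ConjOpposite B) :
    ofConj (c • x) = starRingEnd R c • ofConj x := by
  change MulOpposite.unop x * algebraMap R B (starRingEnd R c) = _
  rw [← Algebra.commutes, ← Algebra.smul_def]
  rfl

end ConjOpposite

open ConjOpposite

structure IsAntilinearAntihom (R : Type*) {A B : Type*} [CommSemiring R] [StarRing R]
    [Semiring A] [Algebra R A] [Semiring B] [Algebra R B] (f : A → B) : Prop where
  map_add : ∀ x y, f (x + y) = f x + f y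
  map_mul : ∀ x y, f (x * y) = f y * f x
  map_smul : ∀ (c : R) x, f (c • x) = starRingEnd R c • f x
  map_one : f 1 = 1

namespace IsAntilinearAntihom

variable {R A B C : Type*} [CommSemiring R] [StarRing R] [Semiring A] [Algebra R A]
  [Semiring B] [Algebra R B] [Semiring C] [Algebra R C] {f : A → B} {g : B → C}

theorem map_zero (hf : IsAntilinearAntihom R f) : f 0 = 0 := by
  rw [← zero_smul R (0 : A), hf.map_smul, _root_.map_zero, zero_smul]

theorem map_algebraMap (hf : IsAntilinearAntihom R f) (c : R) :
    f (algebraMap R A c) = algebraMap R B (starRingEnd R c) := by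
  rw [Algebra.algebraMap_eq_smul_one, hf.map_smul, hf.map_one, Algebra.algebraMap_eq_smul_one]

theorem map_sub {A B : Type*} [Ring A] [Algebra R A] [Ring B] [Algebra R B] {f : A → B}
    (hf : IsAntilinearAntihom R f) (x y : A) : f (x - y) = f x - f y :=
  eq_sub_of_add_eq (by rw [← hf.map_add, sub_add_cancel])

theorem ofConj_comp (φ : A →ₐ[R] ConjOpposite B) : IsAntilinearAntihom R (ofConj ∘ φ) where
  map_add x y := by simp
  map_mul x y := by simp
  map_smul c x := by simp
  map_one := by simp

def toAlgHom (hf : IsAntilinearAntihom R f) : A →ₐ[R] ConjOpposite B where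
  toFun x := toConj (f x)
  map_one' := congrArg toConj hf.map_one
  map_mul' x y := congrArg toConj (hf.map_mul x y)
  map_zero' := congrArg toConj hf.map_zero
  map_add' x y := congrArg toConj (hf.map_add x y)
  commutes' c := congrArg toConj (hf.map_algebraMap c)

@[simp] theorem toAlgHom_apply (hf : IsAntilinearAntihom R f) (x : A) :
    hf.toAlgHom x = toConj (f x) := rfl

def compAlgHom (hg : IsAntilinearAntihom R g) (hf : IsAntilinearAntihom R f) : A →ₐ[R] C where
  toFun := g ∘ f
  map_one' := by simp [hf.map_one, hg.map_one]
  map_mul' x y := by simp [hf.map_mul, hg.map_mul]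
  map_zero' := by simp [hf.map_zero, hg.map_zero]
  map_add' x y := by simp [hf.map_add, hg.map_add]
  commutes' c := by simp [hf.map_algebraMap, hg.map_algebraMap]

@[simp] theorem compAlgHom_apply (hg : IsAntilinearAntihom R g) (hf : IsAntilinearAntihom R f)
    (x : A) : hg.compAlgHom hf x = g (f x) := rfl

end IsAntilinearAntihom

theorem fin_two_rev_zero : (0 : Fin 2).rev = 1 := rfl

theorem fin_two_rev_one : (1 : Fin 2).rev = 0 := rfl

namespace QGL2

variable {q : ℂ}

/-- `RingQuot.mkAlgHom` with codomain `QGL2 q` rather than `RingQuot (GL2Rel q)`, so that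
rewriting sees the instances of `QGL2 q`. -/
def mk (q : ℂ) : FreeAlgebra ℂ GL2Gen →ₐ[ℂ] QGL2 q := RingQuot.mkAlgHom ℂ (GL2Rel q)

theorem mk_rel {x y : FreeAlgebra ℂ GL2Gen} (h : GL2Rel q x y) : mk q x = mk q y :=
  RingQuot.mkAlgHom_rel ℂ h

@[simp] theorem mk_Zf (g : Fin 2 × Fin 2) : mk q (Zf g) = Z q g := rfl

@[simp] theorem mk_Wf : mk q Wf = W q := rfl

@[simp] theorem mk_Df : mk q (Df q) = D q := rfl

theorem Z00_mul_Z01 : Z q (0,0) * Z q (0,1) = q • (Z q (0,1) * Z q (0,0)) := by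
  simpa using mk_rel (GL2Rel.r1 (q := q))

theorem Z00_mul_Z10 : Z q (0,0) * Z q (1,0) = q • (Z q (1,0) * Z q (0,0)) := by
  simpa using mk_rel (GL2Rel.r2 (q := q))

theorem Z01_mul_Z11 : Z q (0,1) * Z q (1,1) = q • (Z q (1,1) * Z q (0,1)) := by
  simpa using mk_rel (GL2Rel.r3 (q := q))

theorem Z10_mul_Z11 : Z q (1,0) * Z q (1,1) = q • (Z q (1,1) * Z q (1,0)) := by
  simpa using mk_rel (GL2Rel.r4 (q := q))

theorem Z10_mul_Z01 : Z q (1,0) * Z q (0,1) = Z q (0,1) * Z q (1,0) := by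
  simpa using mk_rel (GL2Rel.r5 (q := q))

theorem Z00_mul_Z11 :
    Z q (0,0) * Z q (1,1) = Z q (1,1) * Z q (0,0) + (q - q⁻¹) • (Z q (0,1) * Z q (1,0)) := by
  simpa using mk_rel (GL2Rel.r6 (q := q))

theorem D_eq : D q = Z q (0,0) * Z q (1,1) - q • (Z q (0,1) * Z q (1,0)) := by
  simp [← mk_Df, Df]

theorem W_mul_D : W q * D q = 1 := by
  simpa using mk_rel (GL2Rel.rinv1 (q := q))

theorem D_mul_W : D q * W q = 1 := by
  simpa using mk_rel (GL2Rel.rinv2 (q := q))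

theorem W_mul_Z (g : Fin 2 × Fin 2) : W q * Z q g = Z q g * W q := by
  simpa using mk_rel (GL2Rel.rcomm (q := q) g)

theorem W_mul_Z_mul_D (g : Fin 2 × Fin 2) : W q * Z q g * D q = Z q g := by
  rw [W_mul_Z, mul_assoc, W_mul_D, mul_one]

theorem D_mul_W_mul_Z (g : Fin 2 × Fin 2) : D q * (W q * Z q g) = Z q g := by
  rw [← mul_assoc, D_mul_W, one_mul]

theorem algHom_ext {B : Type*} [Semiring B] [Algebra ℂ B] {f g : QGL2 q →ₐ[ℂ] B}
    (hZ : ∀ i, f (Z q i) = g (Z q i)) (hW : f (W q) = g (W q)) : f = g := by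
  refine RingQuot.ringQuot_ext' (S := ℂ) f g (FreeAlgebra.hom_ext (funext fun x => ?_))
  rcases x with i | ⟨⟩
  exacts [hZ i, hW]

/-- The scalar `(-q)^(a+α-2n)` of `(z_a^α)* = (-q)^(a+α-2n) D⁻¹ det_q z_a^α` for `n = 2`,
with 0-indexed `a, α`. -/
def starCoeff (q : ℂ) (g : Fin 2 × Fin 2) : ℂ := (-q) ^ ((g.1 : ℤ) + g.2 - 2)

/-- For `n = 2` the quantum minor of `z_a^α` is the opposite entry `z_{ā}^{ᾱ}`. -/
def starZ (q : ℂ) (g : Fin 2 × Fin 2) : QGL2 q :=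
  starCoeff q g • (W q * Z q (g.1.rev, g.2.rev))

theorem starCoeff_mul_starCoeff (hq : q ≠ 0) (g h : Fin 2 × Fin 2) :
    starCoeff q g * starCoeff q h = (-q) ^ ((g.1 : ℤ) + g.2 + h.1 + h.2 - 4) := by
  rw [starCoeff, starCoeff, ← zpow_add₀ (neg_ne_zero.2 hq)]
  ring_nf

theorem conj_starCoeff (hq' : starRingEnd ℂ q = q) (g : Fin 2 × Fin 2) :
    starRingEnd ℂ (starCoeff q g) = starCoeff q g := by
  rw [starCoeff, map_zpow₀, map_neg, hq']

theorem smul_W_mul_smul_D (hq : q ≠ 0) : (q ^ (-2 : ℤ) • W q) * (q ^ (2 : ℤ) • D q) = 1 := by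
  rw [smul_mul_smul_comm, W_mul_D, zpow_neg_mul_zpow_self 2 hq, one_smul]

theorem smul_D_mul_smul_W (hq : q ≠ 0) : (q ^ (2 : ℤ) • D q) * (q ^ (-2 : ℤ) • W q) = 1 := by
  rw [smul_mul_smul_comm, D_mul_W, mul_comm, zpow_neg_mul_zpow_self 2 hq, one_smul]

theorem starCoeff_mul_starCoeff_rev (hq : q ≠ 0) (g : Fin 2 × Fin 2) :
    starCoeff q g * starCoeff q (g.1.rev, g.2.rev) = q ^ (-2 : ℤ) := by
  have h₁ := g.1.isLt
  have h₂ := g.2.isLt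
  have hexp : (g.1 : ℤ) + g.2 + (g.1.rev : ℕ) + (g.2.rev : ℕ) - 4 = -2 := by
    simp only [Fin.val_rev]
    omega
  rw [starCoeff_mul_starCoeff hq, hexp, Even.neg_zpow (by decide)]

theorem starZ_mul_starZ (g h : Fin 2 × Fin 2) :
    starZ q g * starZ q h = (starCoeff q g * starCoeff q h) •
      (W q * W q * (Z q (g.1.rev, g.2.rev) * Z q (h.1.rev, h.2.rev))) := by
  rw [starZ, starZ, smul_mul_smul_comm, mul_assoc, ← mul_assoc (Z q _), ← W_mul_Z, mul_assoc,
    mul_assoc]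

theorem starZ_mul_starZ_of_commute {g h : Fin 2 × Fin 2} {r : ℂ}
    (hr : Z q (h.1.rev, h.2.rev) * Z q (g.1.rev, g.2.rev)
      = r • (Z q (g.1.rev, g.2.rev) * Z q (h.1.rev, h.2.rev))) :
    starZ q h * starZ q g = r • (starZ q g * starZ q h) := by
  rw [starZ_mul_starZ, starZ_mul_starZ, hr, mul_smul_comm, smul_smul, smul_smul, mul_comm r,
    mul_comm (starCoeff q h)]

theorem starZ11_mul_starZ00 (hq : q ≠ 0) :
    starZ q (1,1) * starZ q (0,0)
      = starZ q (0,0) * starZ q (1,1) + (q - q⁻¹) • (starZ q (1,0) * starZ q (0,1)) := by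
  simp only [starZ_mul_starZ, starCoeff_mul_starCoeff hq, fin_two_rev_zero, fin_two_rev_one]
  rw [Z00_mul_Z11, mul_add, smul_add, mul_smul_comm, smul_comm]
  norm_num

theorem starZ_mul_D (g : Fin 2 × Fin 2) : starZ q g * D q = D q * starZ q g := by
  rw [starZ, smul_mul_assoc, mul_smul_comm, W_mul_Z_mul_D, D_mul_W_mul_Z]

theorem map_det {A : Type*} [Ring A] [Algebra ℂ A] {st : A → QGL2 q}
    (hst : IsAntilinearAntihom ℂ st) (hq : q ≠ 0) (hq' : starRingEnd ℂ q = q)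
    (x : Fin 2 × Fin 2 → A) (hx : ∀ g, st (x g) = starZ q g) :
    st (x (0,0) * x (1,1) - q • (x (0,1) * x (1,0))) = q ^ (-2 : ℤ) • W q := by
  simp only [hst.map_sub, hst.map_mul, hst.map_smul, hx, hq', starZ_mul_starZ,
    starCoeff_mul_starCoeff hq, fin_two_rev_zero, fin_two_rev_one]
  norm_num
  rw [smul_comm q, ← smul_sub, ← mul_smul_comm q (W q * W q), ← mul_sub, ← D_eq, mul_assoc,
    W_mul_D, mul_one]

def starGen (q : ℂ) : GL2Gen → QGL2 q
  | .inl g => starZ q g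
  | .inr () => q ^ (2 : ℤ) • D q

def freeStar (q : ℂ) : FreeAlgebra ℂ GL2Gen →ₐ[ℂ] ConjOpposite (QGL2 q) :=
  FreeAlgebra.lift ℂ (toConj ∘ starGen q)

theorem freeStar_rel (hq : q ≠ 0) (hq' : starRingEnd ℂ q = q) {x y : FreeAlgebra ℂ GL2Gen}
    (h : GL2Rel q x y) : freeStar q x = freeStar q y := by
  set st := ofConj ∘ freeStar q
  have hst : IsAntilinearAntihom ℂ st := .ofConj_comp (freeStar q)
  have hZ (g : Fin 2 × Fin 2) : st (Zf g) = starZ q g := by simp [st, freeStar, Zf, starGen]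
  have hW : st Wf = q ^ (2 : ℤ) • D q := by simp [st, freeStar, Wf, starGen]
  have hD : st (Df q) = q ^ (-2 : ℤ) • W q := map_det hst hq hq' Zf hZ
  suffices st x = st y from congrArg toConj this
  cases h with
  | r1 => simpa [hst.map_mul, hst.map_smul, hZ, hq'] using starZ_mul_starZ_of_commute Z10_mul_Z11
  | r2 => simpa [hst.map_mul, hst.map_smul, hZ, hq'] using starZ_mul_starZ_of_commute Z01_mul_Z11
  | r3 => simpa [hst.map_mul, hst.map_smul, hZ, hq'] using starZ_mul_starZ_of_commute Z00_mul_Z10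
  | r4 => simpa [hst.map_mul, hst.map_smul, hZ, hq'] using starZ_mul_starZ_of_commute Z00_mul_Z01
  | r5 =>
    simpa [hst.map_mul, hZ] using starZ_mul_starZ_of_commute (q := q) (g := (1,0)) (h := (0,1))
      (r := 1) (by rw [one_smul]; exact Z10_mul_Z01)
  | r6 => simpa [hst.map_mul, hst.map_add, hst.map_smul, hZ, hq'] using starZ11_mul_starZ00 hq
  | rinv1 => rw [hst.map_mul, hst.map_one, hW, hD, smul_W_mul_smul_D hq]
  | rinv2 => rw [hst.map_mul, hst.map_one, hW, hD, smul_D_mul_smul_W hq]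
  | rcomm g => rw [hst.map_mul, hst.map_mul, hW, hZ, mul_smul_comm, smul_mul_assoc, starZ_mul_D]

def starAlgHom (hq : q ≠ 0) (hq' : starRingEnd ℂ q = q) : QGL2 q →ₐ[ℂ] ConjOpposite (QGL2 q) :=
  RingQuot.liftAlgHom ℂ ⟨freeStar q, fun _ _ h => freeStar_rel hq hq' h⟩

theorem starAlgHom_mk (hq : q ≠ 0) (hq' : starRingEnd ℂ q = q) (x : FreeAlgebra ℂ GL2Gen) :
    starAlgHom hq hq' (mk q x) = freeStar q x :=
  RingQuot.liftAlgHom_mkAlgHom_apply ℂ _ _ x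

theorem starAlgHom_Z (hq : q ≠ 0) (hq' : starRingEnd ℂ q = q) (g : Fin 2 × Fin 2) :
    ofConj (starAlgHom hq hq' (Z q g)) = starZ q g := by
  rw [← mk_Zf, starAlgHom_mk]
  simp [freeStar, Zf, starGen]

variable {st : QGL2 q → QGL2 q}

theorem map_D (hst : IsAntilinearAntihom ℂ st) (hq : q ≠ 0) (hq' : starRingEnd ℂ q = q)
    (hZ : ∀ g, st (Z q g) = starZ q g) : st (D q) = q ^ (-2 : ℤ) • W q := by
  rw [D_eq]
  exact map_det hst hq hq' (Z q) hZ

theorem map_W (hst : IsAntilinearAntihom ℂ st) (hq : q ≠ 0) (hq' : starRingEnd ℂ q = q)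
    (hZ : ∀ g, st (Z q g) = starZ q g) : st (W q) = q ^ (2 : ℤ) • D q :=
  calc st (W q) = st (W q) * (q ^ (-2 : ℤ) • W q * q ^ (2 : ℤ) • D q) := by
        rw [smul_W_mul_smul_D hq, mul_one]
    _ = st (D q * W q) * (q ^ (2 : ℤ) • D q) := by
        rw [hst.map_mul, map_D hst hq hq' hZ, mul_assoc]
    _ = q ^ (2 : ℤ) • D q := by rw [D_mul_W, hst.map_one, one_mul]

theorem eq_of_map_Z {st₁ st₂ : QGL2 q → QGL2 q} (h₁ : IsAntilinearAntihom ℂ st₁)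
    (h₂ : IsAntilinearAntihom ℂ st₂) (hq : q ≠ 0) (hq' : starRingEnd ℂ q = q)
    (hZ₁ : ∀ g, st₁ (Z q g) = starZ q g) (hZ₂ : ∀ g, st₂ (Z q g) = starZ q g) : st₁ = st₂ := by
  have h : h₁.toAlgHom = h₂.toAlgHom := algHom_ext (by simp [hZ₁, hZ₂])
    (by simp [map_W h₁ hq hq' hZ₁, map_W h₂ hq hq' hZ₂])
  funext x
  exact congrArg ofConj (AlgHom.congr_fun h x)

theorem involutive_of_map_Z (hst : IsAntilinearAntihom ℂ st) (hq : q ≠ 0)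
    (hq' : starRingEnd ℂ q = q) (hZ : ∀ g, st (Z q g) = starZ q g) : Function.Involutive st := by
  have h : hst.compAlgHom hst = AlgHom.id ℂ (QGL2 q) := by
    refine algHom_ext (fun g => ?_) ?_
    · rw [IsAntilinearAntihom.compAlgHom_apply, hZ, starZ, hst.map_smul, hst.map_mul, hZ,
        map_W hst hq hq' hZ, conj_starCoeff hq', starZ, smul_mul_smul_comm, smul_smul,
        ← mul_assoc, starCoeff_mul_starCoeff_rev hq, zpow_neg_mul_zpow_self 2 hq, one_smul]
      simp only [Fin.rev_rev, W_mul_Z_mul_D, AlgHom.id_apply]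
    · rw [IsAntilinearAntihom.compAlgHom_apply, map_W hst hq hq' hZ, hst.map_smul,
        map_D hst hq hq' hZ, map_zpow₀, hq', smul_smul, mul_comm, zpow_neg_mul_zpow_self 2 hq,
        one_smul, AlgHom.id_apply]
  exact fun x => AlgHom.congr_fun h x

theorem forall_map_Z_eq_starZ_iff :
    (∀ g, st (Z q g) = starZ q g) ↔
      st (Z q (0,0)) = q ^ (-2 : ℤ) • (W q * Z q (1,1)) ∧
      st (Z q (1,0)) = (-q⁻¹) • (W q * Z q (0,1)) ∧
      st (Z q (0,1)) = (-q⁻¹) • (W q * Z q (1,0)) ∧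
      st (Z q (1,1)) = W q * Z q (0,0) := by
  norm_num [Prod.forall, Fin.forall_fin_two, starZ, starCoeff, fin_two_rev_zero, fin_two_rev_one]
  tauto

end QGL2

theorem isStar_iff {q : ℝ} (hq : (q : ℂ) ≠ 0) {st : QGL2 q → QGL2 q} :
    IsStar q st ↔ IsAntilinearAntihom ℂ st ∧ ∀ g, st (Z q g) = QGL2.starZ q g := by
  rw [QGL2.forall_map_Z_eq_starZ_iff]
  constructor
  · rintro ⟨hbij, hadd, hmul, hsmul, hZ⟩
    obtain ⟨x, hx⟩ := hbij.2 1
    have hone : st 1 = 1 :=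
      calc st 1 = st 1 * st x := by rw [hx, mul_one]
        _ = 1 := by rw [← hmul, mul_one, hx]
    exact ⟨⟨hadd, hmul, hsmul, hone⟩, hZ⟩
  · rintro ⟨hst, hZ⟩
    have hinv := QGL2.involutive_of_map_Z hst hq (Complex.conj_ofReal q)
      (QGL2.forall_map_Z_eq_starZ_iff.2 hZ)
    exact ⟨hinv.bijective, hst.map_add, hst.map_mul, hst.map_smul, hZ⟩

theorem gl2_star_exists_unique_general (q : ℝ) (h0 : 0 < q) :
    (∃! st : QGL2 (q : ℂ) → QGL2 (q : ℂ), IsStar q st) ∧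
    ∀ st : QGL2 (q : ℂ) → QGL2 (q : ℂ), IsStar q st →
      (∀ x, st (st x) = x) ∧
      D (q : ℂ) * st (D (q : ℂ)) = ((q : ℂ) ^ (-2 : ℤ)) • 1 ∧
      st (D (q : ℂ)) * D (q : ℂ) = ((q : ℂ) ^ (-2 : ℤ)) • 1 := by
  have hq : (q : ℂ) ≠ 0 := Complex.ofReal_ne_zero.2 h0.ne'
  have hq' : starRingEnd ℂ (q : ℂ) = q := Complex.conj_ofReal q
  have hstar := IsAntilinearAntihom.ofConj_comp (QGL2.starAlgHom hq hq')
  have hstarZ := QGL2.starAlgHom_Z hq hq'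
  refine ⟨⟨_, (isStar_iff hq).2 ⟨hstar, hstarZ⟩, fun st hst => ?_⟩, fun st hst => ?_⟩ <;>
    obtain ⟨hst, hZ⟩ := (isStar_iff hq).1 hst
  · exact QGL2.eq_of_map_Z hst hstar hq hq' hZ hstarZ
  · have hD := QGL2.map_D hst hq hq' hZ
    refine ⟨QGL2.involutive_of_map_Z hst hq hq' hZ, ?_, ?_⟩
    · rw [hD, mul_smul_comm, QGL2.D_mul_W]
    · rw [hD, smul_mul_assoc, QGL2.W_mul_D]

/-- ℂ[GL_2]_q carries a unique antilinear antiautomorphism `*` with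
`(z_1^1)* = q^{−2} D^{−1} z_2^2`, `(z_2^1)* = −q^{−1} D^{−1} z_1^2`,
`(z_1^2)* = −q^{−1} D^{−1} z_2^1`, `(z_2^2)* = D^{−1} z_1^1`; it is an involution and
`D D* = D* D = q^{−2}`. -/
theorem gl2_star_exists_unique (q : ℝ) (h0 : 0 < q) (h1 : q < 1) :
    (∃! st : QGL2 (q : ℂ) → QGL2 (q : ℂ), IsStar q st) ∧
    ∀ st : QGL2 (q : ℂ) → QGL2 (q : ℂ), IsStar q st →
      (∀ x, st (st x) = x) ∧
      D (q : ℂ) * st (D (q : ℂ)) = ((q : ℂ) ^ (-2 : ℤ)) • 1 ∧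
      st (D (q : ℂ)) * D (q : ℂ) = ((q : ℂ) ^ (-2 : ℤ)) • 1 :=
  gl2_star_exists_unique_general q h0
end
end
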